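/- (Shape Lemma.) Let R^a ∈ ℚ^{2×k₁} and R^b ∈ ℚ^{2×k₂} have nonzero columns, let f ∈ ℚ² ∖ ℤ², and assume P(R^a,f) ≠ ∅ and P(R^b,f) ≠ ∅. Let ∑_{i=1}^{k₁} αᵢ sᵢ ≥ 1 (α ≥ 0) be valid for conv(P(R^a,f)) with split rank η_a with respect to P(R^a,f)⁰, and let ∑_{i=1}^{k₂} βᵢ sᵢ ≥ 1 (β ≥ 0) be valid for conv(P(R^b,f)) with split rank η_b with respect to P(R^b,f)⁰. If the cone generated by the columns of R^b equals ℝ² and L_α ⊆ L_β (where L_α is built from the columns of R^a and L_β from the columns of R^b), then η_a ≤ η_b. -/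

import Mathlib

open Set Pointwise

abbrev Pt : Type := Fin 2 → ℝ

def IsIntPt (x : Pt) : Prop := ∀ j, ∃ z : ℤ, x j = (z : ℝ)

def IsRatPt (x : Pt) : Prop := ∀ j, ∃ q : ℚ, x j = (q : ℝ)

/-- The mixed-integer set `P(R,f)`. -/
def mixedP (k : ℕ) (r : Fin k → Pt) (f : Pt) : Set (Pt × (Fin k → ℝ)) :=
  {p | IsIntPt p.1 ∧ (∀ i, 0 ≤ p.2 i) ∧ p.1 = f + ∑ i, p.2 i • r i}

/-- The linear relaxation `P(R,f)⁰`. -/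
def relaxP (k : ℕ) (r : Fin k → Pt) (f : Pt) : Set (Pt × (Fin k → ℝ)) :=
  {p | (∀ i, 0 ≤ p.2 i) ∧ p.1 = f + ∑ i, p.2 i • r i}

/-- The convex cone generated by a set (all nonnegative combinations). -/
def coneGen (S : Set Pt) : Set Pt :=
  {x | ∃ (n : ℕ) (c : Fin n → ℝ) (v : Fin n → Pt),
    (∀ j, 0 ≤ c j) ∧ (∀ j, v j ∈ S) ∧ x = ∑ j, c j • v j}

/-- The induced lattice-free set `L_α`. -/
def inducedSet (k : ℕ) (r : Fin k → Pt) (f : Pt) (α : Fin k → ℝ) : Set Pt :=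
  convexHull ℝ ({f} ∪ {x | ∃ i, 0 < α i ∧ x = f + (α i)⁻¹ • r i}) +
    coneGen {x | ∃ i, α i = 0 ∧ x = r i}

def LatticeFree (S : Set Pt) : Prop := ∀ x ∈ interior S, ¬ IsIntPt x

/-- Validity of `∑ αᵢ sᵢ ≥ γ` for `conv(P(R,f))`. -/
def ValidIneq (k : ℕ) (r : Fin k → Pt) (f : Pt) (α : Fin k → ℝ) (γ : ℝ) : Prop :=
  ∀ p ∈ mixedP k r f, γ ≤ ∑ i, α i * p.2 i

noncomputable def affDim {V : Type*} [AddCommGroup V] [Module ℝ V] (S : Set V) : ℕ :=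
  Module.finrank ℝ (affineSpan ℝ S).direction

/-- Facet-defining inequality: valid and its face of the closed convex hull has
affine dimension exactly one less. -/
def IsFacet (k : ℕ) (r : Fin k → Pt) (f : Pt) (α : Fin k → ℝ) (γ : ℝ) : Prop :=
  ValidIneq k r f α γ ∧
  affDim {p ∈ closure (convexHull ℝ (mixedP k r f)) | ∑ i, α i * p.2 i = γ} + 1 =
    affDim (convexHull ℝ (mixedP k r f))

def splitClosure (k : ℕ) (C : Set (Pt × (Fin k → ℝ))) : Set (Pt × (Fin k → ℝ)) :=
  ⋂ (π : Fin 2 → ℤ) (π₀ : ℤ),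
    convexHull ℝ ((C ∩ {p | ∑ j, (π j : ℝ) * p.1 j ≤ (π₀ : ℝ)}) ∪
      (C ∩ {p | (π₀ : ℝ) + 1 ≤ ∑ j, (π j : ℝ) * p.1 j}))

def closures (k : ℕ) (r : Fin k → Pt) (f : Pt) : ℕ → Set (Pt × (Fin k → ℝ))
  | 0 => relaxP k r f
  | n + 1 => splitClosure k (closures k r f n)

/-- The split rank of `∑ αᵢ sᵢ ≥ γ` w.r.t. `P(R,f)⁰`: least `j` such that the
inequality is valid on the `j`-th split closure, `⊤` if none exists. -/
noncomputable def splitRank (k : ℕ) (r : Fin k → Pt) (f : Pt) (α : Fin k → ℝ) (γ : ℝ) : ℕ∞ :=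
  sInf {j : ℕ∞ | ∃ n : ℕ, j = (n : ℕ∞) ∧ ∀ p ∈ closures k r f n, γ ≤ ∑ i, α i * p.2 i}

def IsSplitSet (S : Set Pt) : Prop :=
  ∃ (π : Fin 2 → ℤ) (π₀ : ℤ), π ≠ 0 ∧
    S = {x : Pt | (π₀ : ℝ) ≤ ∑ j, (π j : ℝ) * x j ∧ ∑ j, (π j : ℝ) * x j ≤ (π₀ : ℝ) + 1}

/-- Triangle of type `T¹`. -/
def IsT1 (S : Set Pt) : Prop :=
  ∃ v : Fin 3 → Pt, AffineIndependent ℝ v ∧ (∀ i, IsIntPt (v i)) ∧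
    S = convexHull ℝ (Set.range v) ∧
    ∀ i j, i ≠ j → ∃! z, z ∈ openSegment ℝ (v i) (v j) ∧ IsIntPt z

/-- Triangle of type `T^{2A}`. -/
def IsT2A (S : Set Pt) : Prop :=
  ∃ v0 v1 v2 : Pt, AffineIndependent ℝ ![v0, v1, v2] ∧ ¬ IsIntPt v0 ∧
    S = convexHull ℝ {v0, v1, v2} ∧
    (∃ z1 z2 : Pt, z1 ≠ z2 ∧ IsIntPt z1 ∧ IsIntPt z2 ∧
      z1 ∈ segment ℝ v1 v2 ∧ z2 ∈ segment ℝ v1 v2) ∧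
    (∃! z, z ∈ openSegment ℝ v0 v1 ∧ IsIntPt z) ∧
    (∃! z, z ∈ openSegment ℝ v0 v2 ∧ IsIntPt z)

/-- Triangle of type `T^{2B}`. -/
def IsT2B (S : Set Pt) : Prop :=
  ∃ v0 v1 v2 : Pt, AffineIndependent ℝ ![v0, v1, v2] ∧ ¬ IsIntPt v0 ∧
    S = convexHull ℝ {v0, v1, v2} ∧
    (∃ z1 z2 : Pt, z1 ≠ z2 ∧ IsIntPt z1 ∧ IsIntPt z2 ∧
      z1 ∈ segment ℝ v1 v2 ∧ z2 ∈ segment ℝ v1 v2) ∧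
    (∃! z, z ∈ openSegment ℝ v0 v1 ∧ IsIntPt z) ∧
    (∀ z ∈ openSegment ℝ v0 v2, ¬ IsIntPt z)

/-- Triangle of type `T³`. -/
def IsT3 (S : Set Pt) : Prop :=
  ∃ v0 v1 v2 : Pt, AffineIndependent ℝ ![v0, v1, v2] ∧
    ¬ IsIntPt v0 ∧ ¬ IsIntPt v1 ∧ ¬ IsIntPt v2 ∧
    S = convexHull ℝ {v0, v1, v2} ∧
    (∃! z, z ∈ openSegment ℝ v0 v1 ∧ IsIntPt z) ∧
    (∃! z, z ∈ openSegment ℝ v1 v2 ∧ IsIntPt z) ∧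
    (∃! z, z ∈ openSegment ℝ v0 v2 ∧ IsIntPt z) ∧
    (∀ z, IsIntPt z → z ∈ frontier S →
      z ∈ openSegment ℝ v0 v1 ∨ z ∈ openSegment ℝ v1 v2 ∨ z ∈ openSegment ℝ v0 v2)

/-- A quadrilateral with vertices `v 0, v 1, v 2, v 3` in cyclic order; each `vᵢ`
is an extreme point of the hull and each side lies on the boundary. -/
def IsQuadWith (S : Set Pt) (v : Fin 4 → Pt) : Prop :=
  S = convexHull ℝ (Set.range v) ∧
  (∀ i, v i ∈ Set.extremePoints ℝ S) ∧
  (∀ i : Fin 4, segment ℝ (v i) (v (i + 1)) ⊆ frontier S)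

/-- Quadrilateral of type `Q¹`. -/
def IsQ1 (S : Set Pt) : Prop :=
  ∃ v : Fin 4 → Pt, IsQuadWith S v ∧
    (∃ z1 z2 : Pt, z1 ≠ z2 ∧ IsIntPt z1 ∧ IsIntPt z2 ∧
      z1 ∈ segment ℝ (v 0) (v 1) ∧ z2 ∈ segment ℝ (v 0) (v 1)) ∧
    (∃ j : Fin 4, j ≠ 0 ∧
      (∀ i : Fin 4, i ≠ 0 → i ≠ j → ∃ z, IsIntPt z ∧ z ∈ segment ℝ (v i) (v (i + 1))) ∧
      (∀ z ∈ openSegment ℝ (v j) (v (j + 1)), ¬ IsIntPt z)) ∧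
    (∃ T : Set Pt, (IsT1 T ∨ IsT2A T) ∧ S ⊆ T)

/-- Quadrilateral of type `Q²`. -/
def IsQ2 (S : Set Pt) : Prop :=
  ∃ v : Fin 4 → Pt, IsQuadWith S v ∧ (∀ i, ¬ IsIntPt (v i)) ∧
    ∀ i : Fin 4, ∃! z, z ∈ openSegment ℝ (v i) (v (i + 1)) ∧ IsIntPt z

/-!
If `L_α ⊆ L_β`, every ray `raᵢ` is a nonnegative combination `∑ⱼ μᵢⱼ rbⱼ` of `β`-cost
`∑ⱼ βⱼ μᵢⱼ ≤ αᵢ + ε`: write the point `f + raᵢ / αᵢ` (or `f + raᵢ / ε` if `αᵢ = 0`) of `L_α`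
as a point of `L_β`. The linear map `(x, s) ↦ (x, s μ)` sends `P(R^a, f)⁰` into `P(R^b, f)⁰`, and
since it does not touch `x` it commutes with every split disjunction, hence maps the `n`-th split
closure for `R^a` into the one for `R^b`. Pulling back `∑ βⱼ tⱼ ≥ 1` gives
`∑ αᵢ sᵢ + ε ∑ sᵢ ≥ 1` on the `n`-th closure for `R^a`, and `ε → 0` yields the cut itself.
-/

open Matrix

section RayCombos

variable {ι E : Type*} [Fintype ι] [AddCommGroup E] [Module ℝ E]

def rayCombos (r : ι → E) (β : ι → ℝ) (c : ℝ) : Set E :=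
  {x | ∃ μ : ι → ℝ, 0 ≤ μ ∧ β ⬝ᵥ μ ≤ c ∧ x = ∑ i, μ i • r i}

variable {r : ι → E} {β : ι → ℝ} {c d : ℝ} {x y : E}

lemma self_mem_rayCombos [DecidableEq ι] (i : ι) : r i ∈ rayCombos r β (β i) :=
  ⟨Pi.single i 1, Pi.single_nonneg.mpr zero_le_one, by simp, by simp [Pi.single_apply]⟩

lemma zero_mem_rayCombos (hc : 0 ≤ c) : (0 : E) ∈ rayCombos r β c :=
  ⟨0, le_rfl, by simpa using hc, by simp⟩

lemma rayCombos_mono (h : c ≤ d) : rayCombos r β c ⊆ rayCombos r β d :=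
  fun _ ⟨μ, hμ, hcost, hx⟩ => ⟨μ, hμ, hcost.trans h, hx⟩

lemma add_mem_rayCombos (hx : x ∈ rayCombos r β c) (hy : y ∈ rayCombos r β d) :
    x + y ∈ rayCombos r β (c + d) := by
  obtain ⟨μ, hμ, hμc, rfl⟩ := hx
  obtain ⟨ν, hν, hνd, rfl⟩ := hy
  refine ⟨μ + ν, add_nonneg hμ hν, ?_, ?_⟩
  · rw [dotProduct_add]; exact add_le_add hμc hνd
  · simp only [Pi.add_apply, add_smul, Finset.sum_add_distrib]

lemma smul_mem_rayCombos {t : ℝ} (ht : 0 ≤ t) (hx : x ∈ rayCombos r β c) :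
    t • x ∈ rayCombos r β (t * c) := by
  obtain ⟨μ, hμ, hμc, rfl⟩ := hx
  refine ⟨t • μ, smul_nonneg ht hμ, ?_, ?_⟩
  · rw [dotProduct_smul, smul_eq_mul]; exact mul_le_mul_of_nonneg_left hμc ht
  · simp only [Finset.smul_sum, Pi.smul_apply, smul_eq_mul, smul_smul]

lemma convex_rayCombos : Convex ℝ (rayCombos r β c) := by
  intro x hx y hy a b ha hb hab
  have h := add_mem_rayCombos (smul_mem_rayCombos ha hx) (smul_mem_rayCombos hb hy)
  rwa [← add_mul, hab, one_mul] at h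

end RayCombos

lemma coneGen_subset_rayCombos {k : ℕ} {r : Fin k → Pt} {β : Fin k → ℝ} {S : Set Pt}
    (hS : S ⊆ rayCombos r β 0) : coneGen S ⊆ rayCombos r β 0 := by
  rintro _ ⟨n, c, v, hc, hv, rfl⟩
  refine Finset.sum_induction _ (· ∈ rayCombos r β 0) (fun x y hx hy => ?_)
    (zero_mem_rayCombos le_rfl) fun j _ => ?_
  · simpa using add_mem_rayCombos hx hy
  · simpa using smul_mem_rayCombos (hc j) (hS (hv j))

section InducedSet

variable {k : ℕ} {r : Fin k → Pt} {f : Pt} {α : Fin k → ℝ}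

lemma sub_mem_rayCombos_of_mem_inducedSet {x : Pt} (hx : x ∈ inducedSet k r f α) :
    x - f ∈ rayCombos r α 1 := by
  obtain ⟨h, hh, c, hc, rfl⟩ := hx
  have hull : convexHull ℝ ({f} ∪ {x | ∃ i, 0 < α i ∧ x = f + (α i)⁻¹ • r i}) ⊆
      (· + -f) ⁻¹' rayCombos r α 1 := by
    refine convexHull_min ?_ (convex_rayCombos.translate_preimage_left _)
    rintro _ (rfl | ⟨i, hi, rfl⟩)
    · simpa using zero_mem_rayCombos zero_le_one
    · simpa [inv_mul_cancel₀ hi.ne'] using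
        smul_mem_rayCombos (inv_nonneg.mpr hi.le) (self_mem_rayCombos (β := α) i)
  have cone : c ∈ rayCombos r α 0 := by
    refine coneGen_subset_rayCombos ?_ hc
    rintro _ ⟨i, hi, rfl⟩
    simpa [hi] using self_mem_rayCombos (r := r) (β := α) i
  have sum : h - f + c ∈ rayCombos r α 1 := by
    simpa [sub_eq_add_neg] using add_mem_rayCombos (hull hh) cone
  show h + c - f ∈ _
  rwa [add_sub_right_comm]

lemma add_inv_smul_mem_inducedSet {i : Fin k} (hi : 0 < α i) :
    f + (α i)⁻¹ • r i ∈ inducedSet k r f α :=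
  ⟨_, subset_convexHull ℝ _ (Or.inr ⟨i, hi, rfl⟩), 0,
    ⟨0, Fin.elim0, Fin.elim0, (·.elim0), (·.elim0), by simp⟩, add_zero _⟩

lemma add_smul_mem_inducedSet {i : Fin k} (hi : α i = 0) {t : ℝ} (ht : 0 ≤ t) :
    f + t • r i ∈ inducedSet k r f α :=
  ⟨f, subset_convexHull ℝ _ (Or.inl rfl), t • r i,
    ⟨1, fun _ => t, fun _ => r i, fun _ => ht, fun _ => ⟨i, hi, rfl⟩, by simp⟩, rfl⟩

end InducedSet

/-- The slack `ε` is needed when `α i = 0`: then `ra i` is a recession direction of `L_α`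
and only the points `f + t • ra i` are available. -/
lemma mem_rayCombos_of_inducedSet_subset {k₁ k₂ : ℕ} {ra : Fin k₁ → Pt} {rb : Fin k₂ → Pt}
    {f : Pt} {α : Fin k₁ → ℝ} {β : Fin k₂ → ℝ}
    (hsub : inducedSet k₁ ra f α ⊆ inducedSet k₂ rb f β) {i : Fin k₁} (hi : 0 ≤ α i)
    {ε : ℝ} (hε : 0 < ε) : ra i ∈ rayCombos rb β (α i + ε) := by
  rcases hi.eq_or_lt with hi | hi
  · have h := sub_mem_rayCombos_of_mem_inducedSet
      (hsub (add_smul_mem_inducedSet hi.symm (inv_nonneg.mpr hε.le)))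
    rw [add_sub_cancel_left] at h
    rw [← hi, zero_add]
    simpa [smul_smul, hε.ne'] using smul_mem_rayCombos hε.le h
  · have h := sub_mem_rayCombos_of_mem_inducedSet (hsub (add_inv_smul_mem_inducedSet hi))
    rw [add_sub_cancel_left] at h
    refine rayCombos_mono (c := α i) (by linarith) ?_
    simpa [smul_smul, hi.ne'] using smul_mem_rayCombos hi.le h

lemma splitClosure_subset_convexHull {k : ℕ} (C : Set (Pt × (Fin k → ℝ))) :
    splitClosure k C ⊆ convexHull ℝ C := fun _ hp =>
  convexHull_mono (union_subset inter_subset_left inter_subset_left)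
    (mem_iInter₂.mp hp 0 0)

lemma closures_subset_nonneg {k : ℕ} (r : Fin k → Pt) (f : Pt) (n : ℕ) :
    closures k r f n ⊆ {p | 0 ≤ p.2} := by
  induction n with
  | zero => exact fun _ hp => hp.1
  | succ n ih =>
    exact (splitClosure_subset_convexHull _).trans
      (convexHull_min ih ((convex_Ici 0).linear_preimage (LinearMap.snd ℝ _ _)))

section Transfer

variable {k₁ k₂ : ℕ}

/-- Substituting `raᵢ = ∑ⱼ μᵢⱼ rbⱼ` into `x = f + ∑ᵢ sᵢ raᵢ` turns the slacks `s` into `s ᵥ* μ`. -/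
def slackTransfer (μ : Matrix (Fin k₁) (Fin k₂) ℝ) :
    (Pt × (Fin k₁ → ℝ)) →ₗ[ℝ] (Pt × (Fin k₂ → ℝ)) :=
  LinearMap.id.prodMap μ.vecMulLinear

lemma mapsTo_splitClosure (T : (Pt × (Fin k₁ → ℝ)) →ₗ[ℝ] (Pt × (Fin k₂ → ℝ)))
    (hT : ∀ p, (T p).1 = p.1) {C : Set (Pt × (Fin k₁ → ℝ))} {D : Set (Pt × (Fin k₂ → ℝ))}
    (h : MapsTo T C D) : MapsTo T (splitClosure k₁ C) (splitClosure k₂ D) := by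
  intro p hp
  simp only [splitClosure, mem_iInter] at hp ⊢
  intro π π₀
  have hTp := mem_image_of_mem T (hp π π₀)
  rw [LinearMap.image_convexHull] at hTp
  refine convexHull_mono ?_ hTp
  rintro _ ⟨q, ⟨hqC, hq⟩ | ⟨hqC, hq⟩, rfl⟩
  · exact Or.inl ⟨h hqC, by simpa [hT] using hq⟩
  · exact Or.inr ⟨h hqC, by simpa [hT] using hq⟩

variable {ra : Fin k₁ → Pt} {rb : Fin k₂ → Pt} {μ : Matrix (Fin k₁) (Fin k₂) ℝ}

lemma mapsTo_relaxP_slackTransfer (f : Pt) (hμ : ∀ i j, 0 ≤ μ i j)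
    (hr : ∀ i, ra i = ∑ j, μ i j • rb j) :
    MapsTo (slackTransfer μ) (relaxP k₁ ra f) (relaxP k₂ rb f) := by
  rintro ⟨x, s⟩ ⟨hs, hx⟩
  refine ⟨fun j => Finset.sum_nonneg (s := .univ) fun i _ => mul_nonneg (hs i) (hμ i j), ?_⟩
  simp only [slackTransfer, LinearMap.prodMap_apply, LinearMap.id_apply, vecMulLinear_apply,
    vecMul, dotProduct, hx, hr, Finset.smul_sum, smul_smul, Finset.sum_smul]
  rw [Finset.sum_comm]

lemma mapsTo_closures_slackTransfer (f : Pt) (hμ : ∀ i j, 0 ≤ μ i j)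
    (hr : ∀ i, ra i = ∑ j, μ i j • rb j) (n : ℕ) :
    MapsTo (slackTransfer μ) (closures k₁ ra f n) (closures k₂ rb f n) := by
  induction n with
  | zero => exact mapsTo_relaxP_slackTransfer f hμ hr
  | succ n ih => exact mapsTo_splitClosure _ (fun _ => rfl) ih

end Transfer

lemma le_of_forall_pos_le_add_mul {a b B : ℝ} (hB : 0 ≤ B) (h : ∀ ε > 0, a ≤ b + ε * B) :
    a ≤ b := by
  refine le_of_forall_pos_le_add fun δ hδ => (h (δ / (B + 1)) (by positivity)).trans ?_
  gcongr
  rw [div_mul_eq_mul_div, div_le_iff₀ (by positivity)]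
  nlinarith

lemma one_le_of_inducedSet_subset {k₁ k₂ : ℕ} {ra : Fin k₁ → Pt} {rb : Fin k₂ → Pt} {f : Pt}
    {α : Fin k₁ → ℝ} {β : Fin k₂ → ℝ} (hα : 0 ≤ α)
    (hsub : inducedSet k₁ ra f α ⊆ inducedSet k₂ rb f β) (n : ℕ)
    (hb : ∀ p ∈ closures k₂ rb f n, 1 ≤ ∑ j, β j * p.2 j) :
    ∀ p ∈ closures k₁ ra f n, 1 ≤ ∑ i, α i * p.2 i := by
  intro p hp
  have hs : 0 ≤ p.2 := closures_subset_nonneg ra f n hp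
  refine le_of_forall_pos_le_add_mul (B := ∑ i, p.2 i) (Finset.sum_nonneg fun i _ => hs i)
    fun ε hε => ?_
  choose μ hμ hcost hr using fun i => mem_rayCombos_of_inducedSet_subset hsub (hα i) hε
  calc 1 ≤ β ⬝ᵥ (p.2 ᵥ* μ) := hb _ (mapsTo_closures_slackTransfer f hμ hr n hp)
    _ = p.2 ⬝ᵥ (μ *ᵥ β) := by rw [dotProduct_comm]; exact (dotProduct_mulVec _ _ _).symm
    _ ≤ p.2 ⬝ᵥ (α + fun _ => ε) := by
        refine dotProduct_le_dotProduct_of_nonneg_left (fun i => ?_) hs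
        exact (dotProduct_comm _ _).trans_le (hcost i)
    _ = ∑ i, α i * p.2 i + ε * ∑ i, p.2 i := by
        rw [dotProduct_add, dotProduct_comm, Finset.mul_sum]
        simp only [dotProduct, mul_comm]

lemma splitRank_le_splitRank {k₁ k₂ : ℕ} {r₁ : Fin k₁ → Pt} {r₂ : Fin k₂ → Pt} {f₁ f₂ : Pt}
    {α : Fin k₁ → ℝ} {β : Fin k₂ → ℝ} {γ₁ γ₂ : ℝ}
    (h : ∀ n, (∀ p ∈ closures k₂ r₂ f₂ n, γ₂ ≤ ∑ j, β j * p.2 j) →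
      ∀ p ∈ closures k₁ r₁ f₁ n, γ₁ ≤ ∑ i, α i * p.2 i) :
    splitRank k₁ r₁ f₁ α γ₁ ≤ splitRank k₂ r₂ f₂ β γ₂ :=
  sInf_le_sInf fun _ ⟨n, hj, hn⟩ => ⟨n, hj, h n hn⟩

theorem shape_lemma_general (k₁ k₂ : ℕ)
    (ra : Fin k₁ → Pt) (rb : Fin k₂ → Pt) (f : Pt)
    (α : Fin k₁ → ℝ) (hα : ∀ i, 0 ≤ α i)
    (β : Fin k₂ → ℝ)
    (hsub : inducedSet k₁ ra f α ⊆ inducedSet k₂ rb f β) :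
    splitRank k₁ ra f α 1 ≤ splitRank k₂ rb f β 1 :=
  splitRank_le_splitRank (one_le_of_inducedSet_subset hα hsub)

theorem shape_lemma (k₁ k₂ : ℕ) (hk₁ : 1 ≤ k₁) (hk₂ : 1 ≤ k₂)
    (ra : Fin k₁ → Pt) (rb : Fin k₂ → Pt) (f : Pt)
    (hra_rat : ∀ i, IsRatPt (ra i)) (hra_ne : ∀ i, ra i ≠ 0)
    (hrb_rat : ∀ i, IsRatPt (rb i)) (hrb_ne : ∀ i, rb i ≠ 0)
    (hf_rat : IsRatPt f) (hf_int : ¬ IsIntPt f)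
    (hnea : (mixedP k₁ ra f).Nonempty) (hneb : (mixedP k₂ rb f).Nonempty)
    (α : Fin k₁ → ℝ) (hα : ∀ i, 0 ≤ α i) (hvalida : ValidIneq k₁ ra f α 1)
    (β : Fin k₂ → ℝ) (hβ : ∀ i, 0 ≤ β i) (hvalidb : ValidIneq k₂ rb f β 1)
    (hcone : coneGen (Set.range rb) = Set.univ)
    (hsub : inducedSet k₁ ra f α ⊆ inducedSet k₂ rb f β) :
    splitRank k₁ ra f α 1 ≤ splitRank k₂ rb f β 1 :=
  shape_lemma_general k₁ k₂ ra rb f α hα β hsub
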